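/- arXiv:1108.2817 — 4 statements merged into one kernel-verified Lean document; each statement's English description precedes it below -/
import Mathlib

section
/- Let b, g ∈ L²(𝕋) with b̂(n) = 0 and ĝ(n) = 0 for all n < 0. Write B = Pb, G = Pg, and let F(z) = (1/(2πi))∮_𝕋 b(ζ)·conj(g(ζ))/(ζ − z) dζ for z ∈ 𝔻. Then for every z ∈ 𝔻: F′(z) − conj(G(z))·B′(z) = (1/(2πi))∮_𝕋 (b(ζ) − B(z))·conj(g(ζ) − G(z))/(ζ − z)² dζ. -/
open MeasureTheory Real Complex Filter
open scoped Topology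

noncomputable section

/-- An arc of the unit circle `𝕋`, described by the angle of its midpoint
and its arclength (in `(0, 2π]`). -/
structure Arc where
  center : ℝ
  len : ℝ
  len_pos : 0 < len
  len_le : len ≤ 2 * Real.pi

/-- The mean `f_I` of a boundary function over an arc `I` (angle parametrization). -/
noncomputable def Arc.avg (I : Arc) (u : ℝ → ℂ) : ℂ :=
  (I.len)⁻¹ • ∫ t in (I.center - I.len / 2)..(I.center + I.len / 2), u t

/-- The mean oscillation `(1/|I|) ∫_I |u - u_I| |dζ|` of a boundary function over an arc. -/
noncomputable def Arc.mo (I : Arc) (u : ℝ → ℂ) : ℝ :=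
  (I.len)⁻¹ * ∫ t in (I.center - I.len / 2)..(I.center + I.len / 2), ‖u t - I.avg u‖

/-- The BMO seminorm `‖u‖_*`. -/
noncomputable def bmoSeminorm (u : ℝ → ℂ) : ℝ := ⨆ I : Arc, I.mo u

/-- The logarithmic BMO seminorm `‖u‖_**`. -/
noncomputable def logBmoSeminorm (u : ℝ → ℂ) : ℝ :=
  ⨆ I : Arc, Real.log (4 * Real.pi / I.len) * I.mo u

/-- `‖u‖_* < ∞`. -/
def BmoFinite (u : ℝ → ℂ) : Prop := BddAbove (Set.range fun I : Arc => I.mo u)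

/-- `‖u‖_** < ∞`. -/
def LogBmoFinite (u : ℝ → ℂ) : Prop :=
  BddAbove (Set.range fun I : Arc => Real.log (4 * Real.pi / I.len) * I.mo u)

/-- `u ∈ L²(𝕋)`, where `u` is the boundary function in the angle variable. -/
def MemL2T (u : ℝ → ℂ) : Prop :=
  Function.Periodic u (2 * Real.pi) ∧
    MemLp u 2 (volume.restrict (Set.Ioc (0:ℝ) (2 * Real.pi)))

/-- The `n`-th Fourier coefficient of a boundary function. -/
noncomputable def fc (u : ℝ → ℂ) (n : ℤ) : ℂ :=
  (2 * Real.pi)⁻¹ • ∫ t in (0:ℝ)..(2 * Real.pi),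
    u t * Complex.exp (-(n : ℂ) * t * Complex.I)

/-- The Carleson square `S(I)`. -/
def Arc.box (I : Arc) : Set ℂ :=
  {z | ∃ r t : ℝ, 1 - I.len / (2 * Real.pi) < r ∧ r < 1 ∧
        |t - I.center| < I.len / 2 ∧ z = (r : ℂ) * Complex.exp (t * Complex.I)}

/-- `z_I`, the midpoint of the inner side of `S(I)`. -/
noncomputable def Arc.innerPoint (I : Arc) : ℂ :=
  ((1 - I.len / (2 * Real.pi) : ℝ) : ℂ) * Complex.exp (I.center * Complex.I)

/-- The Cauchy (Szegő) transform `Pu(z) = (1/2πi) ∮_𝕋 u(ζ)/(ζ - z) dζ`. -/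
noncomputable def cauchyT (u : ℝ → ℂ) (z : ℂ) : ℂ :=
  (2 * Real.pi)⁻¹ • ∫ t in (0:ℝ)..(2 * Real.pi),
    u t * Complex.exp (t * Complex.I) / (Complex.exp (t * Complex.I) - z)

/-- `∬_{S(I)} ‖F'(z)‖² (1 - |z|²) dm(z)`. -/
noncomputable def carlesonInt (I : Arc) (F : ℂ → ℂ) : ℝ :=
  ∫ z in I.box, ‖deriv F z‖ ^ 2 * (1 - ‖z‖ ^ 2)

/-!
Differentiating under the integral sign, `F′(z)` and `B′(z)` are the integrals of `b conj g` and
`b` against the kernel `K(ζ) = ζ / (ζ - z)²`. For `|z| < 1` this kernel expands as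
`∑ (n + 1) zⁿ ζ^{-(n+1)}`, which has only negative frequencies, so it integrates to zero against
`conj (g - G(z))`, whose Fourier coefficients vanish at positive frequencies. Splitting
`(b - B) conj (g - G) = b conj (g - G) - B conj (g - G)` then leaves
`∫ b conj g K - conj G ∫ b K = F′(z) - conj (G(z)) B′(z)`.
-/

open scoped ComplexConjugate

lemma one_sub_norm_le_norm_exp_sub (z : ℂ) (t : ℝ) : 1 - ‖z‖ ≤ ‖cexp (t * I) - z‖ := by
  simpa [norm_exp_ofReal_mul_I] using norm_sub_norm_le (cexp (t * I)) z

lemma exp_ofReal_mul_I_sub_ne_zero {z : ℂ} (hz : ‖z‖ < 1) (t : ℝ) : cexp (t * I) - z ≠ 0 :=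
  norm_pos_iff.1 (by linarith [one_sub_norm_le_norm_exp_sub z t])

lemma IntervalIntegrable.conj {u : ℝ → ℂ} {a b : ℝ} (hu : IntervalIntegrable u volume a b) :
    IntervalIntegrable (fun t => conj (u t)) volume a b :=
  ⟨conjCLE.toContinuousLinearMap.integrable_comp hu.1,
    conjCLE.toContinuousLinearMap.integrable_comp hu.2⟩

lemma IntervalIntegrable.mul_exp_div_exp_sub_pow {u : ℝ → ℂ} {a b : ℝ}
    (hu : IntervalIntegrable u volume a b) {z : ℂ} (hz : ‖z‖ < 1) (k : ℕ) :
    IntervalIntegrable (fun t => u t * cexp (t * I) / (cexp (t * I) - z) ^ k) volume a b := by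
  have hcont : Continuous fun t : ℝ => cexp (t * I) / (cexp (t * I) - z) ^ k :=
    by fun_prop (disch := exact fun t => pow_ne_zero _ (exp_ofReal_mul_I_sub_ne_zero hz t))
  simpa only [mul_div_assoc] using hu.mul_continuousOn hcont.continuousOn

theorem hasDerivAt_cauchyT {u : ℝ → ℂ} (hu : IntervalIntegrable u volume 0 (2 * π))
    {z : ℂ} (hz : ‖z‖ < 1) :
    HasDerivAt (cauchyT u)
      ((2 * π)⁻¹ • ∫ t in (0:ℝ)..(2 * π), u t * cexp (t * I) / (cexp (t * I) - z) ^ 2) z := by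
  obtain ⟨ε, hε, hεz⟩ : ∃ ε > 0, ‖z‖ + 2 * ε = 1 := ⟨(1 - ‖z‖) / 2, by linarith, by ring⟩
  have hball : ∀ w ∈ Metric.ball z ε, ‖w‖ < 1 ∧ ∀ t : ℝ, ε ≤ ‖cexp (t * I) - w‖ := by
    intro w hw
    have hw' : ‖w‖ < ‖z‖ + ε := by
      linarith [norm_le_norm_add_norm_sub' w z, mem_ball_iff_norm.1 hw]
    exact ⟨by linarith, fun t => by linarith [one_sub_norm_le_norm_exp_sub w t]⟩
  have hderiv := intervalIntegral.hasDerivAt_integral_of_dominated_loc_of_deriv_le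
    (F := fun w t => u t * cexp (t * I) / (cexp (t * I) - w))
    (F' := fun w t => u t * cexp (t * I) / (cexp (t * I) - w) ^ 2)
    (bound := fun t => ‖u t‖ / ε ^ 2) (Metric.ball_mem_nhds z hε)
    (eventually_of_mem (Metric.ball_mem_nhds z hε) fun w hw => by
      simpa using (hu.mul_exp_div_exp_sub_pow (hball w hw).1 1).aestronglyMeasurable_restrict_uIoc)
    (by simpa using hu.mul_exp_div_exp_sub_pow hz 1)
    (hu.mul_exp_div_exp_sub_pow hz 2).aestronglyMeasurable_restrict_uIoc
    (.of_forall fun t _ w hw => by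
      rw [norm_div, norm_mul, norm_exp_ofReal_mul_I, mul_one, norm_pow]
      gcongr
      exact (hball w hw).2 t)
    (hu.norm.div_const _)
    (.of_forall fun t _ w hw => by
      have hne := exp_ofReal_mul_I_sub_ne_zero (hball w hw).1 t
      simpa [div_eq_mul_inv] using
        (((hasDerivAt_id w).const_sub (cexp (t * I))).inv hne).const_mul (u t * cexp (t * I)))
  exact hderiv.2.const_smul (2 * π)⁻¹

lemma hasSum_exp_div_exp_sub_sq {z : ℂ} (hz : ‖z‖ < 1) (t : ℝ) :
    HasSum (fun n : ℕ => ((n : ℂ) + 1) * z ^ n * cexp (-((n : ℂ) + 1) * t * I))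
      (cexp (t * I) / (cexp (t * I) - z) ^ 2) := by
  set e := cexp (t * I)
  have he : e ≠ 0 := Complex.exp_ne_zero _
  have hw : ‖z * e⁻¹‖ < 1 := by simpa [e, norm_exp_ofReal_mul_I] using hz
  have hsum : e⁻¹ * (1 / (1 - z * e⁻¹) ^ (1 + 1)) = e / (e - z) ^ 2 := by
    have hez := exp_ofReal_mul_I_sub_ne_zero hz t
    rw [show 1 - z * e⁻¹ = (e - z) / e by field_simp, one_add_one_eq_two, div_pow, one_div_div]
    field_simp
  have hterm (n : ℕ) : ((n : ℂ) + 1) * z ^ n * cexp (-((n : ℂ) + 1) * t * I) =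
      e⁻¹ * (((n + 1).choose 1 : ℕ) * (z * e⁻¹) ^ n) := by
    have hexp : cexp (-((n : ℂ) + 1) * t * I) = e⁻¹ ^ (n + 1) := by
      rw [← Complex.exp_neg, ← Complex.exp_nat_mul]; push_cast; ring_nf
    rw [hexp, Nat.choose_one_right]; push_cast; ring
  rw [← hsum]
  exact ((hasSum_choose_mul_geometric_of_norm_lt_one 1 hw).mul_left e⁻¹).congr_fun hterm

lemma fc_sub {u v : ℝ → ℂ} (hu : IntervalIntegrable u volume 0 (2 * π))
    (hv : IntervalIntegrable v volume 0 (2 * π)) (n : ℤ) :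
    fc (fun t => u t - v t) n = fc u n - fc v n := by
  have hexp : Continuous fun t : ℝ => cexp (-(n : ℂ) * t * I) := by fun_prop
  simp only [fc, sub_mul, ← smul_sub]
  rw [intervalIntegral.integral_sub (hu.mul_continuousOn hexp.continuousOn)
    (hv.mul_continuousOn hexp.continuousOn)]

lemma fc_const_of_ne_zero (c : ℂ) {n : ℤ} (hn : n ≠ 0) : fc (fun _ => c) n = 0 := by
  have hc : -(n : ℂ) * I ≠ 0 := mul_ne_zero (neg_ne_zero.2 (Int.cast_ne_zero.2 hn)) I_ne_zero
  have hperiod : cexp (-(n : ℂ) * I * (2 * π : ℝ)) = 1 := by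
    rw [← exp_int_mul_two_pi_mul_I (-n)]; push_cast; ring_nf
  have hlin (t : ℝ) : c * cexp (-(n : ℂ) * t * I) = c * cexp (-(n : ℂ) * I * t) := by ring_nf
  simp only [fc, hlin, intervalIntegral.integral_const_mul, integral_exp_mul_complex hc, hperiod]
  simp

lemma fc_conj (u : ℝ → ℂ) (n : ℤ) : fc (fun t => conj (u t)) n = conj (fc u (-n)) := by
  have hexp (t : ℝ) : cexp (-(n : ℂ) * t * I) = conj (cexp (-((-n : ℤ) : ℂ) * t * I)) := by
    rw [← Complex.exp_conj]; simp
  simp only [fc, RCLike.conj_smul, ← intervalIntegral.intervalIntegral_conj, map_mul, hexp]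

theorem integral_mul_exp_div_exp_sub_sq_eq_zero {v : ℝ → ℂ}
    (hv : IntervalIntegrable v volume 0 (2 * π)) (hv0 : ∀ n : ℤ, 0 < n → fc v n = 0)
    {z : ℂ} (hz : ‖z‖ < 1) :
    ∫ t in (0:ℝ)..(2 * π), v t * cexp (t * I) / (cexp (t * I) - z) ^ 2 = 0 := by
  have hterm (n : ℕ) : ∫ t in (0:ℝ)..(2 * π),
      v t * (((n : ℂ) + 1) * z ^ n * cexp (-((n : ℂ) + 1) * t * I)) = 0 := by
    have h := hv0 (n + 1) (by omega)
    simp only [fc, smul_eq_zero, inv_eq_zero, mul_eq_zero, OfNat.ofNat_ne_zero, pi_ne_zero,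
      or_self, false_or, Int.cast_add, Int.cast_natCast, Int.cast_one] at h
    simp only [mul_left_comm (v _), intervalIntegral.integral_const_mul, h, mul_zero]
  have hgeom : Summable fun n : ℕ => ((n : ℝ) + 1) * ‖z‖ ^ n := by
    have hz' : ‖‖z‖‖ < 1 := by simpa using hz
    simpa [Nat.choose_one_right] using (summable_choose_mul_geometric_of_norm_lt_one 1 hz')
  have hsum := intervalIntegral.hasSum_integral_of_dominated_convergence
    (F := fun (n : ℕ) t => v t * (((n : ℂ) + 1) * z ^ n * cexp (-((n : ℂ) + 1) * t * I)))
    (bound := fun (n : ℕ) t => ‖v t‖ * (((n : ℝ) + 1) * ‖z‖ ^ n))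
    (fun n => hv.aestronglyMeasurable_restrict_uIoc.mul
      (by fun_prop : Continuous _).aestronglyMeasurable)
    (fun n => .of_forall fun t _ => by
      have hn : ‖(n : ℂ) + 1‖ = n + 1 := by exact_mod_cast Complex.norm_natCast (n + 1)
      simp [hn, norm_exp])
    (.of_forall fun t _ => hgeom.mul_left _)
    (by simpa only [tsum_mul_left] using hv.norm.mul_const _)
    (.of_forall fun t _ => (hasSum_exp_div_exp_sub_sq hz t).mul_left (v t))
  simp only [hterm] at hsum
  simpa only [mul_div_assoc] using hsum.unique hasSum_zero

lemma MemL2T.intervalIntegrable {u : ℝ → ℂ} (hu : MemL2T u) :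
    IntervalIntegrable u volume 0 (2 * π) :=
  (intervalIntegrable_iff_integrableOn_Ioc_of_le (by positivity)).2 (hu.2.integrable one_le_two)

lemma MemL2T.intervalIntegrable_mul_conj {u v : ℝ → ℂ} (hu : MemL2T u) (hv : MemL2T v) :
    IntervalIntegrable (fun t => u t * conj (v t)) volume 0 (2 * π) :=
  (intervalIntegrable_iff_integrableOn_Ioc_of_le (by positivity)).2 (hu.2.integrable_mul hv.2.star)

lemma integral_conj_sub_const_mul_exp_div_exp_sub_sq_eq_zero {u : ℝ → ℂ}
    (hu : IntervalIntegrable u volume 0 (2 * π)) (hu0 : ∀ n : ℤ, n < 0 → fc u n = 0) (c : ℂ)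
    {z : ℂ} (hz : ‖z‖ < 1) :
    ∫ t in (0:ℝ)..(2 * π), conj (u t - c) * cexp (t * I) / (cexp (t * I) - z) ^ 2 = 0 := by
  refine integral_mul_exp_div_exp_sub_sq_eq_zero (hu.sub intervalIntegrable_const).conj
    (fun n hn => ?_) hz
  rw [fc_conj, fc_sub hu intervalIntegrable_const, hu0 _ (by omega),
    fc_const_of_ne_zero _ (by omega), sub_zero, map_zero]

lemma integral_sub_mul_conj_sub_mul_exp_div_exp_sub_sq {u v : ℝ → ℂ}
    (hu : IntervalIntegrable u volume 0 (2 * π)) (hv : IntervalIntegrable v volume 0 (2 * π))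
    (huv : IntervalIntegrable (fun t => u t * conj (v t)) volume 0 (2 * π)) {z : ℂ}
    (hz : ‖z‖ < 1) (a c : ℂ)
    (horth : ∫ t in (0:ℝ)..(2 * π), conj (v t - c) * cexp (t * I) / (cexp (t * I) - z) ^ 2 = 0) :
    ∫ t in (0:ℝ)..(2 * π), (u t - a) * conj (v t - c) * cexp (t * I) / (cexp (t * I) - z) ^ 2 =
      (∫ t in (0:ℝ)..(2 * π), u t * conj (v t) * cexp (t * I) / (cexp (t * I) - z) ^ 2) -
        conj c * ∫ t in (0:ℝ)..(2 * π), u t * cexp (t * I) / (cexp (t * I) - z) ^ 2 := by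
  have hvc : IntervalIntegrable (fun t => conj (v t - c)) volume 0 (2 * π) :=
    (hv.sub intervalIntegrable_const).conj
  have huvc : IntervalIntegrable (fun t => u t * conj (v t - c)) volume 0 (2 * π) := by
    simpa only [map_sub, mul_sub] using huv.sub (hu.mul_const (conj c))
  calc _ = (∫ t in (0:ℝ)..(2 * π), u t * conj (v t - c) * cexp (t * I) / (cexp (t * I) - z) ^ 2)
        - a * ∫ t in (0:ℝ)..(2 * π), conj (v t - c) * cexp (t * I) / (cexp (t * I) - z) ^ 2 := by
        rw [← intervalIntegral.integral_const_mul, ← intervalIntegral.integral_sub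
          (huvc.mul_exp_div_exp_sub_pow hz 2) ((hvc.mul_exp_div_exp_sub_pow hz 2).const_mul a)]
        congr 1 with t; ring
    _ = ∫ t in (0:ℝ)..(2 * π), u t * conj (v t) * cexp (t * I) / (cexp (t * I) - z) ^ 2
        - conj c * (u t * cexp (t * I) / (cexp (t * I) - z) ^ 2) := by
        rw [horth, mul_zero, sub_zero]
        congr 1 with t; rw [map_sub]; ring
    _ = _ := by
        rw [intervalIntegral.integral_sub (huv.mul_exp_div_exp_sub_pow hz 2)
          ((hu.mul_exp_div_exp_sub_pow hz 2).const_mul _), intervalIntegral.integral_const_mul]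

theorem stmt_4_general (b g : ℝ → ℂ) (hb : MemL2T b) (hg : MemL2T g)
    (hg0 : ∀ n : ℤ, n < 0 → fc g n = 0) :
    ∀ z : ℂ, ‖z‖ < 1 →
      deriv (cauchyT fun t => b t * (starRingEnd ℂ) (g t)) z -
          (starRingEnd ℂ) (cauchyT g z) * deriv (cauchyT b) z =
        (2 * Real.pi)⁻¹ • ∫ t in (0:ℝ)..(2 * Real.pi),
          (b t - cauchyT b z) * (starRingEnd ℂ) (g t - cauchyT g z) *
            Complex.exp (t * Complex.I) / (Complex.exp (t * Complex.I) - z) ^ 2 := by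
  intro z hz
  have hbI := hb.intervalIntegrable
  have hgI := hg.intervalIntegrable
  have hbgI := hb.intervalIntegrable_mul_conj hg
  rw [(hasDerivAt_cauchyT hbgI hz).deriv, (hasDerivAt_cauchyT hbI hz).deriv,
    integral_sub_mul_conj_sub_mul_exp_div_exp_sub_sq hbI hgI hbgI hz _ _
      (integral_conj_sub_const_mul_exp_div_exp_sub_sq_eq_zero hgI hg0 _ hz),
    smul_sub, mul_smul_comm]

/-- The identity `F'(z) - conj(G(z)) B'(z)
= (1/2πi) ∮_𝕋 (b(ζ) - B(z)) conj(g(ζ) - G(z)) / (ζ - z)² dζ` for `z ∈ 𝔻`,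
where `B = Pb`, `G = Pg`, `F = P(b · conj g)`. -/
theorem stmt_4 (b g : ℝ → ℂ) (hb : MemL2T b) (hg : MemL2T g)
    (hb0 : ∀ n : ℤ, n < 0 → fc b n = 0) (hg0 : ∀ n : ℤ, n < 0 → fc g n = 0) :
    ∀ z : ℂ, ‖z‖ < 1 →
      deriv (cauchyT fun t => b t * (starRingEnd ℂ) (g t)) z -
          (starRingEnd ℂ) (cauchyT g z) * deriv (cauchyT b) z =
        (2 * Real.pi)⁻¹ • ∫ t in (0:ℝ)..(2 * Real.pi),
          (b t - cauchyT b z) * (starRingEnd ℂ) (g t - cauchyT g z) *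
            Complex.exp (t * Complex.I) / (Complex.exp (t * Complex.I) - z) ^ 2 :=
  stmt_4_general b g hb hg hg0
end
end

section
/- There is an absolute constant c > 0 such that for every arc I of 𝕋 with arclength |I| ∈ (0, 2π]: (1/|I|)∬_{S(I)} 1/((1 − |z|²)·log²(2/(1 − |z|²))) dm(z) ≤ c / log(4π/|I|). -/
open MeasureTheory Real Complex Filter
open scoped Topology

noncomputable section

/-!
In polar coordinates `z = r e^{iθ}` the Carleson square `S(I)` is the rectangle
`(1 - h, 1) × I` with `h = |I| / 2π`, so the integral is
`|I| ∫_{1-h}^1 r dr / ((1 - r²) log²(2 / (1 - r²)))`. The integrand is the derivative of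
`-1 / (2 log(2 / (1 - r²)))`, which tends to `0` as `r → 1`; hence the mean over `S(I)` is
`1 / (2 log(2 / (h (2 - h))))`, and `log(2 / h) ≤ 2 log(2 / (h (2 - h)))` gives the bound
with `c = 1`.
-/

open Set

theorem Complex.polarCoord_symm_apply_eq_mul_exp (p : ℝ × ℝ) :
    Complex.polarCoord.symm p = p.1 * cexp (p.2 * I) := by
  simp [Complex.exp_mul_I]

theorem Complex.injOn_polarCoord_symm_Ioi_prod_Ioo {α β : ℝ} (h : β - α ≤ 2 * π) :
    InjOn Complex.polarCoord.symm (Ioi 0 ×ˢ Ioo α β) := by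
  rintro p ⟨hp₁, hp₂⟩ q ⟨hq₁, hq₂⟩ hpq
  have hr : p.1 = q.1 := by
    simpa [abs_of_pos (mem_Ioi.mp hp₁), abs_of_pos (mem_Ioi.mp hq₁)] using congrArg norm hpq
  rw [Complex.polarCoord_symm_apply_eq_mul_exp, Complex.polarCoord_symm_apply_eq_mul_exp, hr,
    ← Circle.coe_exp, ← Circle.coe_exp] at hpq
  have hθ : Circle.exp p.2 = Circle.exp q.2 :=
    Circle.ext (mul_left_cancel₀ (by simpa [← hr] using (mem_Ioi.mp hp₁).ne') hpq)
  exact Prod.ext hr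
    (Circle.exp_injOn_Ico h (Ioo_subset_Ico_self hp₂) (Ioo_subset_Ico_self hq₂) hθ)

theorem Complex.setIntegral_image_polarCoord_symm {E : Type*} [NormedAddCommGroup E]
    [NormedSpace ℝ E] {s : Set (ℝ × ℝ)} (hs : MeasurableSet s)
    (hinj : InjOn Complex.polarCoord.symm s) (f : ℂ → E) :
    ∫ z in Complex.polarCoord.symm '' s, f z =
      ∫ p in s, |p.1| • f (Complex.polarCoord.symm p) := by
  have hcomp : Complex.polarCoord.symm = measurableEquivRealProd.symm ∘ polarCoord.symm :=
    funext fun p => (measurableEquivRealProd_symm_polarCoord_symm_apply p).symm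
  rw [hcomp] at hinj ⊢
  rw [image_comp, (Complex.volume_preserving_equiv_real_prod.symm).setIntegral_image_emb
      measurableEquivRealProd.symm.measurableEmbedding f,
    integral_image_eq_integral_abs_det_fderiv_smul volume hs
      (fun p _ => (hasFDerivAt_polarCoord_symm p).hasFDerivWithinAt)
      (hinj.of_comp)]
  simp_rw [det_fderivPolarCoordSymm, Function.comp_apply]

theorem Complex.setIntegral_image_polarCoord_symm_Ioo_prod_Ioo_norm {a b α β : ℝ}
    (ha : 0 ≤ a) (hαβ : α ≤ β) (h : β - α ≤ 2 * π) (f : ℝ → ℝ) :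
    ∫ z in Complex.polarCoord.symm '' (Ioo a b ×ˢ Ioo α β), f ‖z‖ =
      (β - α) * ∫ r in Ioo a b, r * f r := by
  have hpos : Ioo a b ⊆ Ioi 0 := fun r hr => ha.trans_lt hr.1
  have hrad : ∀ p ∈ Ioo a b ×ˢ Ioo α β,
      |p.1| • f ‖Complex.polarCoord.symm p‖ = p.1 * f p.1 * 1 := by
    rintro p ⟨hp, -⟩
    rw [Complex.norm_polarCoord_symm, abs_of_pos (hpos hp), smul_eq_mul, mul_one]
  rw [Complex.setIntegral_image_polarCoord_symm (measurableSet_Ioo.prod measurableSet_Ioo)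
      ((Complex.injOn_polarCoord_symm_Ioi_prod_Ioo h).mono (prod_mono hpos subset_rfl)),
    setIntegral_congr_fun (measurableSet_Ioo.prod measurableSet_Ioo) hrad,
    Measure.volume_eq_prod, setIntegral_prod_mul (fun r => r * f r) (fun _ => (1 : ℝ)),
    setIntegral_const, Real.volume_real_Ioo_of_le hαβ, smul_eq_mul, mul_one, mul_comm]

theorem Arc.box_eq_image (I : Arc) :
    I.box = Complex.polarCoord.symm '' (Ioo (1 - I.len / (2 * π)) 1 ×ˢ
      Ioo (I.center - I.len / 2) (I.center + I.len / 2)) := by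
  ext z
  simp only [Arc.box, mem_image, mem_prod, mem_Ioo, Prod.exists,
    Complex.polarCoord_symm_apply_eq_mul_exp, abs_sub_lt_iff]
  constructor
  · rintro ⟨r, t, hr₁, hr₂, ⟨ht₁, ht₂⟩, rfl⟩
    exact ⟨r, t, ⟨⟨hr₁, hr₂⟩, by linarith, by linarith⟩, rfl⟩
  · rintro ⟨r, t, ⟨⟨hr₁, hr₂⟩, ht₁, ht₂⟩, rfl⟩
    exact ⟨r, t, hr₁, hr₂, ⟨by linarith, by linarith⟩, rfl⟩

def logWeight (r : ℝ) : ℝ := 1 / ((1 - r ^ 2) * Real.log (2 / (1 - r ^ 2)) ^ 2)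

theorem one_lt_two_div_one_sub_sq {r : ℝ} (hr : r ^ 2 < 1) : 1 < 2 / (1 - r ^ 2) := by
  rw [one_lt_div (by linarith)]
  nlinarith

theorem hasDerivAt_log_two_div_one_sub_sq {r : ℝ} (hr : r ^ 2 < 1) :
    HasDerivAt (fun r : ℝ => Real.log (2 / (1 - r ^ 2))) (2 * r / (1 - r ^ 2)) r := by
  have hsub : HasDerivAt (fun r : ℝ => 1 - r ^ 2) (-(2 * r)) r := by
    simpa using (hasDerivAt_pow 2 r).const_sub 1
  have hdiv : HasDerivAt (fun r : ℝ => 2 / (1 - r ^ 2)) (2 * (2 * r) / (1 - r ^ 2) ^ 2) r :=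
    ((hasDerivAt_const r (2 : ℝ)).div hsub (by linarith)).congr_deriv (by ring)
  refine (hdiv.log (zero_lt_one.trans (one_lt_two_div_one_sub_sq hr)).ne').congr_deriv ?_
  field_simp

theorem hasDerivAt_neg_inv_two_mul_log {r : ℝ} (hr : r ^ 2 < 1) :
    HasDerivAt (fun r : ℝ => -(2 * Real.log (2 / (1 - r ^ 2)))⁻¹) (r * logWeight r) r := by
  have hlog : 0 < Real.log (2 / (1 - r ^ 2)) := log_pos (one_lt_two_div_one_sub_sq hr)
  refine (((hasDerivAt_log_two_div_one_sub_sq hr).const_mul 2).inv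
    (by positivity)).neg.congr_deriv ?_
  unfold logWeight
  field_simp

theorem tendsto_neg_inv_two_mul_log :
    Tendsto (fun r : ℝ => -(2 * Real.log (2 / (1 - r ^ 2)))⁻¹) (𝓝[<] 1) (𝓝 0) := by
  have hsub : Tendsto (fun r : ℝ => 1 - r ^ 2) (𝓝[<] 1) (𝓝[>] 0) := by
    refine tendsto_nhdsWithin_iff.mpr ⟨?_, ?_⟩
    · have hcont : Continuous fun r : ℝ => 1 - r ^ 2 := by fun_prop
      exact tendsto_nhdsWithin_of_tendsto_nhds (hcont.tendsto' 1 0 (by norm_num))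
    · filter_upwards [Ioo_mem_nhdsLT zero_lt_one] with r hr
      simp only [mem_Ioi, sub_pos]
      nlinarith [hr.1, hr.2]
  have hlog : Tendsto (fun r : ℝ => Real.log (2 / (1 - r ^ 2))) (𝓝[<] 1) atTop := by
    simp only [div_eq_mul_inv]
    exact tendsto_log_atTop.comp (hsub.inv_tendsto_nhdsGT_zero.const_mul_atTop two_pos)
  simpa using (tendsto_inv_atTop_zero.comp (hlog.const_mul_atTop two_pos)).neg

theorem integral_Ioo_mul_logWeight {a : ℝ} (ha : 0 ≤ a) (ha1 : a < 1) :
    ∫ r in Ioo a 1, r * logWeight r = (2 * Real.log (2 / (1 - a ^ 2)))⁻¹ := by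
  set G : ℝ → ℝ := fun r : ℝ => -(2 * Real.log (2 / (1 - r ^ 2)))⁻¹
  have hsq {r : ℝ} (hr : r ∈ Ico a 1) : r ^ 2 < 1 := by nlinarith [hr.1, hr.2]
  have hderiv : ∀ r ∈ Ioo a 1, HasDerivAt G (r * logWeight r) r :=
    fun r hr => hasDerivAt_neg_inv_two_mul_log (hsq (Ioo_subset_Ico_self hr))
  -- junk values give `G 1 = 0`, which is also the limit of `G` at `1`
  have hG1 : G 1 = 0 := by simp [G]
  have hcont : ContinuousOn G (Icc a 1) := by
    intro r hr
    rcases hr.2.lt_or_eq with hr1 | rfl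
    · exact (hasDerivAt_neg_inv_two_mul_log (hsq ⟨hr.1, hr1⟩)).continuousAt.continuousWithinAt
    · refine (continuousWithinAt_Iio_iff_Iic.mp ?_).mono fun x hx => hx.2
      rw [ContinuousWithinAt, hG1]
      exact tendsto_neg_inv_two_mul_log
  have hnonneg : ∀ r ∈ Ioo a 1, 0 ≤ r * logWeight r := by
    intro r hr
    have : 0 < 1 - r ^ 2 := sub_pos.mpr (hsq (Ioo_subset_Ico_self hr))
    unfold logWeight
    exact mul_nonneg (ha.trans hr.1.le) (by positivity)
  have hint : IntervalIntegrable (fun r => r * logWeight r) volume a 1 :=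
    intervalIntegral.intervalIntegrable_deriv_of_nonneg (by rwa [uIcc_of_le ha1.le])
      (by simpa [ha1.le] using hderiv) (by simpa [ha1.le] using hnonneg)
  rw [← integral_Ioc_eq_integral_Ioo, ← intervalIntegral.integral_of_le ha1.le,
    intervalIntegral.integral_eq_sub_of_hasDerivAt_of_le ha1.le hcont hderiv hint, hG1]
  simp [G]

theorem Arc.len_div_two_pi_pos (I : Arc) : 0 < I.len / (2 * π) :=
  div_pos I.len_pos (by positivity)

theorem Arc.len_div_two_pi_le_one (I : Arc) : I.len / (2 * π) ≤ 1 :=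
  (div_le_one (by positivity)).mpr I.len_le

theorem Arc.setIntegral_box_norm (I : Arc) (f : ℝ → ℝ) :
    ∫ z in I.box, f ‖z‖ = I.len * ∫ r in Ioo (1 - I.len / (2 * π)) 1, r * f r := by
  rw [Arc.box_eq_image, Complex.setIntegral_image_polarCoord_symm_Ioo_prod_Ioo_norm
      (by linarith [I.len_div_two_pi_le_one]) (by linarith [I.len_pos]) (by linarith [I.len_le])]
  congr 1
  ring

theorem log_two_div_le_two_mul_log {h : ℝ} (h0 : 0 < h) (h1 : h ≤ 1) :
    Real.log (2 / h) ≤ 2 * Real.log (2 / (1 - (1 - h) ^ 2)) := by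
  have hq : 1 - (1 - h) ^ 2 = h * (2 - h) := by ring
  have hq0 : 0 < h * (2 - h) := by nlinarith
  rw [hq, ← Real.log_rpow (by positivity), Real.rpow_two]
  apply Real.log_le_log (by positivity)
  rw [div_pow, div_le_div_iff₀ h0 (by positivity)]
  nlinarith [mul_le_mul h1 (show 2 - h ≤ 2 by linarith) (by linarith) zero_le_one]

/-- The direct calculation:
`(1/|I|) ∬_{S(I)} dm(z) / ((1-|z|²) log²(2/(1-|z|²))) ≤ c / log(4π/|I|)`. -/
theorem stmt_6 : ∃ c > (0:ℝ), ∀ I : Arc,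
    (I.len)⁻¹ * ∫ z in I.box,
        1 / ((1 - ‖z‖ ^ 2) * (Real.log (2 / (1 - ‖z‖ ^ 2))) ^ 2) ≤
      c / Real.log (4 * Real.pi / I.len) := by
  refine ⟨1, one_pos, fun I => ?_⟩
  have h0 := I.len_div_two_pi_pos
  have h1 := I.len_div_two_pi_le_one
  have hlen : 4 * π / I.len = 2 / (I.len / (2 * π)) := by
    field_simp [I.len_pos.ne']
    ring
  change I.len⁻¹ * ∫ z in I.box, logWeight ‖z‖ ≤ _
  rw [Arc.setIntegral_box_norm, integral_Ioo_mul_logWeight (by linarith) (by linarith),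
    inv_mul_cancel_left₀ I.len_pos.ne', hlen, one_div]
  exact inv_anti₀ (Real.log_pos (by rw [one_lt_div h0]; linarith))
    (log_two_div_le_two_mul_log h0 h1)
end
end

section
/- Let (x_k) be a sequence of nonzero real numbers with |x_{k+1}| ≤ |x_k|/2 for all k, and let (y_k) be a sequence of positive real numbers. Then for every index n: Σ_{k ≠ n} y_k / ((x_n − x_k)² + y_n²) ≤ 4·Σ_{k} y_k / x_k² (where the sums range over all indices k ≥ 1, the left one excluding k = n). -/
open MeasureTheory Real Complex Filter
open scoped Topology

noncomputable section

/-- `G_ψ(z) = (1/(πi)) ∫_ℝ ψ(t)/(z - t) dt`, the analytic extension `ψ + iHψ`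
of an integrable `ψ : ℝ → ℝ` to the upper half-plane. -/
noncomputable def UHG (ψ : ℝ → ℝ) (z : ℂ) : ℂ :=
  ((Real.pi : ℂ) * Complex.I)⁻¹ • ∫ t : ℝ, ((ψ t : ℂ) / (z - (t : ℂ)))

/-- The hypotheses on the bump function `φ`: measurable, odd, `0 ≤ φ ≤ 1` on `(0,∞)`,
`φ = 1` on `(0,1]` and `φ = 0` on `[2,∞)`. -/
def IsPhi (φ : ℝ → ℝ) : Prop :=
  Measurable φ ∧ (∀ x : ℝ, φ (-x) = - φ x) ∧ (∀ x : ℝ, 0 < x → 0 ≤ φ x ∧ φ x ≤ 1) ∧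
    (∀ x : ℝ, 0 < x → x ≤ 1 → φ x = 1) ∧ (∀ x : ℝ, 2 ≤ x → φ x = 0)

/-! Every term `k ≠ n` of the left-hand sum is at most four times the `k`-th term on the
right: the halving condition keeps `x n` at distance at least `|x k| / 2` from `x k`, so the
denominator `(x n - x k)² + (y n)²` is at least `(x k)² / 4`. -/

section Halving

variable {E : Type*} [SeminormedAddCommGroup E] {x : ℕ → E}

theorem norm_le_half_norm_of_lt (hx : ∀ k, ‖x (k + 1)‖ ≤ ‖x k‖ / 2) {k m : ℕ}
    (hkm : k < m) : ‖x m‖ ≤ ‖x k‖ / 2 := by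
  induction m, hkm using Nat.le_induction with
  | base => exact hx k
  | succ m _ ih => linarith [hx m, norm_nonneg (x m)]

theorem half_norm_le_norm_sub (hx : ∀ k, ‖x (k + 1)‖ ≤ ‖x k‖ / 2) {k n : ℕ}
    (hkn : k ≠ n) : ‖x k‖ / 2 ≤ ‖x n - x k‖ := by
  rcases hkn.lt_or_gt with hlt | hgt
  · have hn := norm_le_half_norm_of_lt hx hlt
    have := norm_sub_norm_le (x k) (x n)
    rw [norm_sub_rev] at this
    linarith
  · have hk := norm_le_half_norm_of_lt hx hgt
    linarith [norm_sub_norm_le (x n) (x k), norm_nonneg (x k)]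

end Halving

theorem ENNReal.ofReal_div_le_ofReal_div_of_le {a c d : ℝ} (hc : 0 < c) (hcd : c ≤ d) :
    ENNReal.ofReal (a / d) ≤ ENNReal.ofReal (a / c) := by
  rcases le_or_gt 0 a with ha | ha
  · exact ENNReal.ofReal_le_ofReal (div_le_div_of_nonneg_left ha hc hcd)
  · rw [ENNReal.ofReal_of_nonpos (div_nonpos_of_nonpos_of_nonneg ha.le (hc.trans_le hcd).le)]
    exact bot_le

theorem stmt_13_general (x y : ℕ → ℝ) (hx0 : ∀ k, x k ≠ 0)
    (hxhalf : ∀ k, |x (k + 1)| ≤ |x k| / 2) :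
    ∀ n : ℕ,
      (∑' k : ℕ, ENNReal.ofReal
          (if k = n then 0 else y k / ((x n - x k) ^ 2 + (y n) ^ 2))) ≤
        4 * ∑' k : ℕ, ENNReal.ofReal (y k / (x k) ^ 2) := by
  intro n
  rw [← ENNReal.tsum_mul_left]
  refine ENNReal.tsum_le_tsum fun k => ?_
  split_ifs with hkn
  · simp
  have hsep : |x k / 2| ≤ |x n - x k| := by
    rw [abs_div, abs_two]
    exact half_norm_le_norm_sub (x := x) hxhalf hkn
  have hden : (x k) ^ 2 / 4 ≤ (x n - x k) ^ 2 + (y n) ^ 2 := by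
    nlinarith [sq_le_sq.mpr hsep, sq_nonneg (y n)]
  calc ENNReal.ofReal (y k / ((x n - x k) ^ 2 + (y n) ^ 2))
      ≤ ENNReal.ofReal (y k / ((x k) ^ 2 / 4)) :=
        ENNReal.ofReal_div_le_ofReal_div_of_le (by have := hx0 k; positivity) hden
    _ = ENNReal.ofReal (4 * (y k / (x k) ^ 2)) := by
      rw [div_div_eq_mul_div, mul_div_right_comm, mul_comm]
    _ = 4 * ENNReal.ofReal (y k / (x k) ^ 2) := by
      rw [ENNReal.ofReal_mul zero_le_four, ENNReal.ofReal_ofNat]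

/-- The summation estimate: if `|x (k+1)| ≤ |x k|/2` and `y k > 0`, then for every `n`,
`Σ_{k ≠ n} y k / ((x n - x k)² + (y n)²) ≤ 4 Σ_k y k / (x k)²` (sums in `[0, ∞]`). -/
theorem stmt_13 (x y : ℕ → ℝ) (hx0 : ∀ k, x k ≠ 0)
    (hxhalf : ∀ k, |x (k + 1)| ≤ |x k| / 2) (hy : ∀ k, 0 < y k) :
    ∀ n : ℕ,
      (∑' k : ℕ, ENNReal.ofReal
          (if k = n then 0 else y k / ((x n - x k) ^ 2 + (y n) ^ 2))) ≤
        4 * ∑' k : ℕ, ENNReal.ofReal (y k / (x k) ^ 2) :=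
  stmt_13_general x y hx0 hxhalf
end
end

section
/- Let (x_n), (y_n) be real sequences with y_n > 0, y_n → 0 and x_n → 0. Then there exists a measurable, compactly supported function ψ : ℝ → ℝ with |ψ(x)| ≤ 1 for all x ∈ ℝ such that limsup_{n→∞} |G_ψ(x_n + i·y_n)| / log(1/y_n) ≥ 1/π, where G_ψ(z) = (1/(πi))∫_ℝ ψ(t)/(z − t) dt for z ∈ ℍ. (Since ψ ∈ L^∞(ℝ), the function G_ψ = ψ + iHψ belongs to BMOA of the upper half-plane; this is the construction of the function g in the proof of the main theorem.) -/
/-!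
The real part of `1 / (u + b i - t)` is `(u - t) / ((u - t) ^ 2 + b ^ 2)`, with primitive
`-log ((u - t) ^ 2 + b ^ 2) / 2` in `t`. So `‖G_ψ(u + b i)‖` is at least `π⁻¹` times the absolute
value of `∫ ψ(t) (u - t) / ((u - t) ^ 2 + b ^ 2) dt`, and an odd bump (`+1` on `(a, a + r]`, `-1`
on `[a - r, a)`) centred at `a = u` contributes `log (b ^ 2 / (r ^ 2 + b ^ 2)) = log b + O(1)` as
soon as `b ≲ r ^ 2`.

If `x n ^ 2 ≤ y n` infinitely often, one bump at `0` of radius `1` does it. Otherwise pass to a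
subsequence with `|x (n (k+1))| ≤ min (|x (n k)|, y (n k)) / 8` and sum bumps of radius
`|x (n k)| / 2` centred at `x (n k)`; their supports are disjoint annuli. At `z (n k)` the `k`-th
bump gives `log (y (n k)) + O(1)`, each earlier bump is at distance comparable to its size and
gives `O(1)`, and all later ones together live on a set of length `O(y (n k))` where the kernel is
`O(1 / y (n k))`. The resulting loss `O(k)` is negligible because `log (1 / y (n k))` at least
doubles with `k`.
-/

open MeasureTheory Real Complex Filter
open scoped Topology

noncomputable section

open Set

def cauchyKernelRe (u b t : ℝ) : ℝ := (u - t) / ((u - t) ^ 2 + b ^ 2)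

section CauchyKernel

variable {b : ℝ}

lemma cauchyKernelRe_eq_re (u b t : ℝ) :
    cauchyKernelRe u b t = (1 / (u + b * I - t)).re := by
  simp [cauchyKernelRe, Complex.normSq_apply, sq]

lemma continuous_cauchyKernelRe (u : ℝ) (hb : b ≠ 0) : Continuous (cauchyKernelRe u b) :=
  Continuous.div (by fun_prop) (by fun_prop) fun t => by positivity

lemma abs_cauchyKernelRe_le (u t : ℝ) (hb : 0 < b) : |cauchyKernelRe u b t| ≤ 1 / (2 * b) := by
  rw [cauchyKernelRe, abs_div, abs_of_pos (by positivity : 0 < (u - t) ^ 2 + b ^ 2),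
    div_le_div_iff₀ (by positivity) (by positivity)]
  nlinarith [sq_nonneg (|u - t| - b), sq_abs (u - t)]

lemma abs_cauchyKernelRe_le_inv (u b t : ℝ) : |cauchyKernelRe u b t| ≤ |u - t|⁻¹ := by
  rcases eq_or_ne u t with rfl | hut
  · simp [cauchyKernelRe]
  have hpos : 0 < |u - t| := abs_pos.2 (sub_ne_zero.2 hut)
  rw [cauchyKernelRe, abs_div, abs_of_pos (by positivity : 0 < (u - t) ^ 2 + b ^ 2),
    div_le_iff₀ (by positivity), ← sq_abs (u - t)]
  field_simp
  nlinarith [sq_nonneg b]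

lemma hasDerivAt_log_cauchyKernelRe (u : ℝ) (hb : b ≠ 0) (t : ℝ) :
    HasDerivAt (fun s => -Real.log ((u - s) ^ 2 + b ^ 2) / 2) (cauchyKernelRe u b t) t := by
  have h : HasDerivAt (fun s => (u - s) ^ 2 + b ^ 2) (2 * (u - t) * -1) t := by
    simpa using (((hasDerivAt_id t).const_sub u).pow 2).add_const (b ^ 2)
  refine ((h.log (by positivity)).neg.div_const 2).congr_deriv ?_
  rw [cauchyKernelRe]
  field_simp

lemma intervalIntegral_cauchyKernelRe (u : ℝ) (hb : b ≠ 0) (p q : ℝ) :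
    ∫ t in p..q, cauchyKernelRe u b t
      = (Real.log ((u - p) ^ 2 + b ^ 2) - Real.log ((u - q) ^ 2 + b ^ 2)) / 2 := by
  rw [intervalIntegral.integral_eq_sub_of_hasDerivAt
    (fun s _ => hasDerivAt_log_cauchyKernelRe u hb s)
    ((continuous_cauchyKernelRe u hb).intervalIntegrable p q)]
  ring

lemma MeasureTheory.Integrable.mul_cauchyKernelRe {f : ℝ → ℝ} (hf : Integrable f) (u : ℝ)
    (hb : 0 < b) :
    Integrable (fun t => f t * cauchyKernelRe u b t) :=
  hf.mul_bdd (continuous_cauchyKernelRe u hb.ne').aestronglyMeasurable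
    (Eventually.of_forall fun t => by
      simpa only [Real.norm_eq_abs] using abs_cauchyKernelRe_le u t hb)

end CauchyKernel

lemma inv_pi_mul_abs_integral_le_norm_UHG {ψ : ℝ → ℝ} (hψ : Integrable ψ) (u : ℝ) {b : ℝ}
    (hb : 0 < b) : π⁻¹ * |∫ t, ψ t * cauchyKernelRe u b t| ≤ ‖UHG ψ (u + b * I)‖ := by
  have hint : Integrable (fun t : ℝ => (ψ t : ℂ) / (u + b * I - t)) := by
    simp_rw [div_eq_mul_inv]
    refine hψ.ofReal.mul_bdd (c := b⁻¹)
      ((measurable_const.sub Complex.measurable_ofReal).inv.aestronglyMeasurable)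
      (Eventually.of_forall fun t => ?_)
    rw [norm_inv]
    exact inv_anti₀ hb (by simpa [abs_of_pos hb] using Complex.abs_im_le_norm (u + b * I - t))
  have hre : ∫ t, ψ t * cauchyKernelRe u b t = (∫ t : ℝ, (ψ t : ℂ) / (u + b * I - t)).re := by
    have h := integral_re hint
    simp only [RCLike.re_to_complex] at h
    rw [← h]
    congr 1 with t
    rw [cauchyKernelRe_eq_re, ← Complex.re_ofReal_mul, mul_one_div]
  rw [UHG, norm_smul, norm_inv, norm_mul, Complex.norm_real, Complex.norm_I, mul_one,
    Real.norm_of_nonneg pi_pos.le, hre]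
  exact mul_le_mul_of_nonneg_left (Complex.abs_re_le_norm _) (by positivity)

lemma abs_integral_mul_le_of_support {f g : ℝ → ℝ} {l r M : ℝ} (hlr : l ≤ r)
    (hf : ∀ t, |f t| ≤ 1) (hsupp : ∀ t ∉ Icc l r, f t = 0) (hg : ∀ t ∈ Icc l r, |g t| ≤ M) :
    |∫ t, f t * g t| ≤ (r - l) * M := by
  rw [← setIntegral_eq_integral_of_forall_compl_eq_zero fun t ht => by rw [hsupp t ht, zero_mul]]
  have h := norm_setIntegral_le_of_norm_le_const (μ := volume) (f := fun t => f t * g t)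
    measure_Icc_lt_top fun t ht => by
      rw [Real.norm_eq_abs, abs_mul]
      exact (mul_le_mul (hf t) (hg t ht) (abs_nonneg _) zero_le_one).trans (one_mul M).le
  rwa [Real.volume_real_Icc_of_le hlr, mul_comm] at h

def oddBump (a r : ℝ) : ℝ → ℝ := (Ioc a (a + r)).indicator 1 - (Ico (a - r) a).indicator 1

section OddBump

variable (a r : ℝ)

lemma measurable_oddBump : Measurable (oddBump a r) :=
  (measurable_const.indicator measurableSet_Ioc).sub (measurable_const.indicator measurableSet_Ico)

lemma abs_oddBump_le (t : ℝ) : |oddBump a r t| ≤ 1 := by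
  simp only [oddBump, Pi.sub_apply, indicator, Pi.one_apply]
  split_ifs <;> norm_num

variable {a r} in
lemma abs_sub_le_of_oddBump_ne_zero {t : ℝ} (h : oddBump a r t ≠ 0) : t ≠ a ∧ |t - a| ≤ r := by
  have hmem : t ∈ Ioc a (a + r) ∨ t ∈ Ico (a - r) a := by
    by_contra! h'
    simp [oddBump, h'.1, h'.2] at h
  rcases hmem with ⟨h₁, h₂⟩ | ⟨h₁, h₂⟩
  · exact ⟨h₁.ne', abs_le.2 ⟨by linarith, by linarith⟩⟩
  · exact ⟨h₂.ne, abs_le.2 ⟨by linarith, by linarith⟩⟩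

lemma oddBump_eq_zero_of_notMem {t : ℝ} (ht : t ∉ Icc (a - r) (a + r)) : oddBump a r t = 0 := by
  by_contra h
  have h := (abs_sub_le_of_oddBump_ne_zero h).2
  exact ht ⟨by linarith [neg_abs_le (t - a)], by linarith [le_abs_self (t - a)]⟩

lemma integrable_oddBump : Integrable (oddBump a r) :=
  ((integrableOn_const measure_Ioc_lt_top.ne).integrable_indicator measurableSet_Ioc).sub
    ((integrableOn_const measure_Ico_lt_top.ne).integrable_indicator measurableSet_Ico)

lemma hasCompactSupport_oddBump : HasCompactSupport (oddBump a r) :=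
  HasCompactSupport.intro isCompact_Icc fun _ => oddBump_eq_zero_of_notMem a r

lemma integral_oddBump_mul_cauchyKernelRe (u : ℝ) {b : ℝ} (hb : b ≠ 0) (hr : 0 ≤ r) :
    ∫ t, oddBump a r t * cauchyKernelRe u b t
      = Real.log ((u - a) ^ 2 + b ^ 2)
        - (Real.log ((u - a - r) ^ 2 + b ^ 2) + Real.log ((u - a + r) ^ 2 + b ^ 2)) / 2 := by
  have hK := continuous_cauchyKernelRe u hb
  have hsplit : (fun t => oddBump a r t * cauchyKernelRe u b t)
      = fun t => (Ioc a (a + r)).indicator (cauchyKernelRe u b) t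
        - (Ico (a - r) a).indicator (cauchyKernelRe u b) t := by
    ext t
    by_cases h₁ : t ∈ Ioc a (a + r) <;> by_cases h₂ : t ∈ Ico (a - r) a <;>
      simp [oddBump, indicator, h₁, h₂]
  rw [hsplit, integral_sub ((integrable_indicator_iff measurableSet_Ioc).2 hK.integrableOn_Ioc)
      ((integrable_indicator_iff measurableSet_Ico).2
        (hK.integrableOn_Icc.mono_set Ico_subset_Icc_self)),
    integral_indicator measurableSet_Ioc, integral_indicator measurableSet_Ico,
    integral_Ico_eq_integral_Ioo, ← integral_Ioc_eq_integral_Ioo,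
    ← intervalIntegral.integral_of_le (by linarith : a ≤ a + r),
    ← intervalIntegral.integral_of_le (by linarith : a - r ≤ a),
    intervalIntegral_cauchyKernelRe u hb, intervalIntegral_cauchyKernelRe u hb]
  ring_nf

end OddBump

lemma inv_pi_mul_sub_le_norm_UHG {ψ : ℝ → ℝ} (hψ : Integrable ψ) (u : ℝ) {b C : ℝ} (hb : 0 < b)
    (h : ∫ t, ψ t * cauchyKernelRe u b t ≤ Real.log b + C) :
    π⁻¹ * (Real.log (1 / b) - C) ≤ ‖UHG ψ (u + b * I)‖ := by
  refine le_trans (mul_le_mul_of_nonneg_left ?_ (by positivity))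
    (inv_pi_mul_abs_integral_le_norm_UHG hψ u hb)
  have := neg_le_abs (∫ t, ψ t * cauchyKernelRe u b t)
  rw [one_div, Real.log_inv]
  linarith

lemma integral_oddBump_zero_one_mul_cauchyKernelRe_le {u b : ℝ} (hb : 0 < b) (hb₁ : b ≤ 1 / 4)
    (hub : u ^ 2 ≤ b) :
    ∫ t, oddBump 0 1 t * cauchyKernelRe u b t ≤ Real.log b + Real.log 8 := by
  rw [integral_oddBump_mul_cauchyKernelRe 0 1 u hb.ne' zero_le_one, sub_zero]
  have hu₁ : u ≤ 1 / 2 := by nlinarith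
  have hu₂ : -(1 / 2) ≤ u := by nlinarith
  have h₀ : Real.log (u ^ 2 + b ^ 2) ≤ Real.log 2 + Real.log b := by
    rw [← Real.log_mul two_ne_zero hb.ne']
    exact Real.log_le_log (by positivity) (by nlinarith)
  have h₁ : Real.log (1 / 4) ≤ Real.log ((u - 1) ^ 2 + b ^ 2) :=
    Real.log_le_log (by norm_num) (by nlinarith)
  have h₂ : Real.log (1 / 4) ≤ Real.log ((u + 1) ^ 2 + b ^ 2) :=
    Real.log_le_log (by norm_num) (by nlinarith)
  have h₄ : Real.log (1 / 4) = -(2 * Real.log 2) := by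
    rw [one_div, Real.log_inv, (by norm_num : (4 : ℝ) = 2 ^ 2), Real.log_pow, Nat.cast_ofNat]
  have h₈ : Real.log 8 = 3 * Real.log 2 := by
    rw [(by norm_num : (8 : ℝ) = 2 ^ 3), Real.log_pow, Nat.cast_ofNat]
  linarith

lemma eventually_sub_le_div {ι : Type*} {l : Filter ι} {a ε : ℝ} {G L C : ι → ℝ}
    (hC : Tendsto (fun i => C i / L i) l (𝓝 0))
    (h : ∀ᶠ i in l, 0 < L i ∧ a * (L i - C i) ≤ G i) (hε : 0 < ε) :
    ∀ᶠ i in l, a - ε ≤ G i / L i := by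
  have hsmall : ∀ᶠ i in l, a * (C i / L i) < ε :=
    (hC.const_mul a).eventually_lt_const (by simpa using hε)
  filter_upwards [h, hsmall] with i ⟨hL, hG⟩ hi
  rw [le_div_iff₀ hL]
  rw [mul_div_assoc', div_lt_iff₀ hL] at hi
  linarith

lemma tendsto_log_one_div_atTop {y : ℕ → ℝ} (hy : ∀ n, 0 < y n) (hy0 : Tendsto y atTop (𝓝 0)) :
    Tendsto (fun n => Real.log (1 / y n)) atTop atTop := by
  simp_rw [one_div]
  exact tendsto_log_atTop.comp (tendsto_inv_nhdsGT_zero.comp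
    (tendsto_nhdsWithin_iff.2 ⟨hy0, Eventually.of_forall hy⟩))

/-- `limsup ‖G_ψ(x n + i y n)‖ / log (1 / y n) ≥ a`, phrased without `limsup`, which is a junk
value for sequences that are not bounded above. -/
def NormUHGDivLogLimsupGe (ψ : ℝ → ℝ) (x y : ℕ → ℝ) (a : ℝ) : Prop :=
  ∀ ε > (0 : ℝ), ∃ᶠ n in atTop, a - ε ≤ ‖UHG ψ (x n + y n * I)‖ / Real.log (1 / y n)

lemma normUHGDivLogLimsupGe_of_subseq {ψ : ℝ → ℝ} {x y : ℕ → ℝ} {a : ℝ} {n : ℕ → ℕ}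
    (hn : Tendsto n atTop atTop) {C : ℕ → ℝ}
    (hC : Tendsto (fun k => C k / Real.log (1 / y (n k))) atTop (𝓝 0))
    (h : ∀ᶠ k in atTop, 0 < Real.log (1 / y (n k)) ∧
      a * (Real.log (1 / y (n k)) - C k) ≤ ‖UHG ψ (x (n k) + y (n k) * I)‖) :
    NormUHGDivLogLimsupGe ψ x y a :=
  fun _ hε => hn.frequently (eventually_sub_le_div hC h hε).frequently

lemma normUHGDivLogLimsupGe_oddBump {x y : ℕ → ℝ} (hy : ∀ n, 0 < y n)
    (hy0 : Tendsto y atTop (𝓝 0)) (h : ∃ᶠ n in atTop, x n ^ 2 ≤ y n) :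
    NormUHGDivLogLimsupGe (oddBump 0 1) x y π⁻¹ := by
  obtain ⟨n, hn, hxy⟩ := extraction_of_frequently_atTop h
  have hL := (tendsto_log_one_div_atTop hy hy0).comp hn.tendsto_atTop
  refine normUHGDivLogLimsupGe_of_subseq hn.tendsto_atTop (C := fun _ => Real.log 8)
    (tendsto_const_nhds.div_atTop hL) ?_
  filter_upwards [hL.eventually_gt_atTop 0,
    (hy0.comp hn.tendsto_atTop).eventually_le_const (by norm_num : (0 : ℝ) < 1 / 4)]
    with k hLk hyk
  exact ⟨hLk, inv_pi_mul_sub_le_norm_UHG (integrable_oddBump 0 1) _ (hy _)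
    (integral_oddBump_zero_one_mul_cauchyKernelRe_le (hy _) hyk (hxy k))⟩

lemma abs_bounds_of_oddBump_ne_zero {a t : ℝ} (h : oddBump a (|a| / 2) t ≠ 0) :
    0 < |a| ∧ |a| / 2 ≤ |t| ∧ |t| ≤ 3 * |a| / 2 := by
  obtain ⟨hta, hle⟩ := abs_sub_le_of_oddBump_ne_zero h
  have h₁ := abs_sub_abs_le_abs_sub a t
  have h₂ := abs_sub_abs_le_abs_sub t a
  rw [abs_sub_comm a t] at h₁
  refine ⟨abs_pos.2 fun ha => hta ?_, by linarith, by linarith⟩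
  rw [ha, abs_zero, zero_div] at hle
  simpa [ha, sub_eq_zero] using hle

def IsLacunary (c : ℕ → ℝ) : Prop := ∀ j k, j < k → |c k| ≤ |c j| / 8

def lacunaryBumps (c : ℕ → ℝ) (t : ℝ) : ℝ := ∑' k, oddBump (c k) (|c k| / 2) t

section LacunaryBumps

variable {c : ℕ → ℝ}

lemma IsLacunary.comp_add (hc : IsLacunary c) (m : ℕ) : IsLacunary fun j => c (j + m) :=
  fun _ _ hij => hc _ _ (by omega)

lemma oddBump_eq_zero_of_lt (hc : IsLacunary c) {j k : ℕ} (hjk : j < k)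
    {t : ℝ} (hk : oddBump (c k) (|c k| / 2) t ≠ 0) : oddBump (c j) (|c j| / 2) t = 0 := by
  by_contra hj
  obtain ⟨hj₀, hj₁, -⟩ := abs_bounds_of_oddBump_ne_zero hj
  obtain ⟨-, -, hk₂⟩ := abs_bounds_of_oddBump_ne_zero hk
  linarith [hc j k hjk]

lemma exists_forall_ne_oddBump_eq_zero (hc : IsLacunary c) (t : ℝ) :
    ∃ j, ∀ i ≠ j, oddBump (c i) (|c i| / 2) t = 0 := by
  by_cases h : ∃ j, oddBump (c j) (|c j| / 2) t ≠ 0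
  · obtain ⟨j, hj⟩ := h
    refine ⟨j, fun i hij => ?_⟩
    rcases hij.lt_or_gt with hij | hij
    · exact oddBump_eq_zero_of_lt hc hij hj
    · by_contra hi
      exact hj (oddBump_eq_zero_of_lt hc hij hi)
  · simp only [not_exists, not_not] at h
    exact ⟨0, fun i _ => h i⟩

lemma summable_oddBump (hc : IsLacunary c) (t : ℝ) :
    Summable fun k => oddBump (c k) (|c k| / 2) t := by
  obtain ⟨j, hj⟩ := exists_forall_ne_oddBump_eq_zero hc t
  exact summable_of_ne_finset_zero (s := {j}) fun i hi => hj i (by simpa using hi)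

lemma exists_lacunaryBumps_eq (hc : IsLacunary c) (t : ℝ) :
    ∃ j, lacunaryBumps c t = oddBump (c j) (|c j| / 2) t := by
  obtain ⟨j, hj⟩ := exists_forall_ne_oddBump_eq_zero hc t
  exact ⟨j, tsum_eq_single j hj⟩

lemma abs_lacunaryBumps_le (hc : IsLacunary c) (t : ℝ) :
    |lacunaryBumps c t| ≤ 1 := by
  obtain ⟨j, hj⟩ := exists_lacunaryBumps_eq hc t
  exact hj ▸ abs_oddBump_le _ _ t

lemma lacunaryBumps_eq_zero_of_notMem (hc : IsLacunary c) {t : ℝ}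
    (ht : t ∉ Icc (-(3 * |c 0| / 2)) (3 * |c 0| / 2)) : lacunaryBumps c t = 0 := by
  obtain ⟨j, hj⟩ := exists_lacunaryBumps_eq hc t
  rw [hj]
  by_contra h
  have hj₀ : |c j| ≤ |c 0| := by
    rcases j.eq_zero_or_pos with rfl | hj
    · rfl
    · linarith [hc 0 j hj, abs_nonneg (c 0)]
  have := (abs_bounds_of_oddBump_ne_zero h).2.2
  exact ht (abs_le.1 (by linarith))

lemma measurable_lacunaryBumps (hc : IsLacunary c) :
    Measurable (lacunaryBumps c) :=
  measurable_of_tendsto_metrizable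
    (fun _ => Finset.measurable_sum _ fun _ _ => measurable_oddBump _ _)
    (tendsto_pi_nhds.2 fun t => (summable_oddBump hc t).hasSum.tendsto_sum_nat)

lemma hasCompactSupport_lacunaryBumps (hc : IsLacunary c) :
    HasCompactSupport (lacunaryBumps c) :=
  HasCompactSupport.intro isCompact_Icc fun _ => lacunaryBumps_eq_zero_of_notMem hc

lemma integrable_lacunaryBumps (hc : IsLacunary c) :
    Integrable (lacunaryBumps c) :=
  (Measure.integrableOn_of_bounded (M := 1) measure_Icc_lt_top.ne
    (measurable_lacunaryBumps hc).aestronglyMeasurable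
    (ae_of_all _ fun t => abs_lacunaryBumps_le hc t)).integrable_of_forall_notMem_eq_zero
    fun _ => lacunaryBumps_eq_zero_of_notMem hc

lemma lacunaryBumps_eq_sum_add (hc : IsLacunary c) (k : ℕ) (t : ℝ) :
    lacunaryBumps c t
      = ∑ j ∈ Finset.range k, oddBump (c j) (|c j| / 2) t + lacunaryBumps (fun j => c (j + k)) t :=
  ((summable_oddBump hc t).sum_add_tsum_nat_add k).symm

end LacunaryBumps

lemma abs_integral_oddBump_mul_cauchyKernelRe_le_four {a u : ℝ} (ha : a ≠ 0) (b : ℝ)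
    (hu : |u| ≤ |a| / 8) : |∫ t, oddBump a (|a| / 2) t * cauchyKernelRe u b t| ≤ 4 := by
  have ha' : 0 < |a| := abs_pos.2 ha
  have h := abs_integral_mul_le_of_support (l := a - |a| / 2) (r := a + |a| / 2) (M := 4 / |a|)
    (by linarith) (abs_oddBump_le a _)
    (fun _ => oddBump_eq_zero_of_notMem a _) fun t ht => by
      have hta : |t - a| ≤ |a| / 2 := abs_le.2 ⟨by linarith [ht.1], by linarith [ht.2]⟩
      have hut : |a| / 4 ≤ |u - t| := by
        linarith [abs_sub_abs_le_abs_sub a t, abs_sub_abs_le_abs_sub t u, abs_sub_comm a t,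
          abs_sub_comm t u]
      calc |cauchyKernelRe u b t| ≤ |u - t|⁻¹ := abs_cauchyKernelRe_le_inv u b t
        _ ≤ (|a| / 4)⁻¹ := inv_anti₀ (by positivity) hut
        _ = 4 / |a| := by rw [inv_div]
  rwa [(by field_simp; ring : (a + |a| / 2 - (a - |a| / 2)) * (4 / |a|) = 4)] at h

lemma integral_oddBump_mul_cauchyKernelRe_self_le {a b : ℝ} (hb : 0 < b) (hba : b < a ^ 2) :
    ∫ t, oddBump a (|a| / 2) t * cauchyKernelRe a b t ≤ Real.log b + 2 * Real.log 2 := by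
  have h : Real.log (b / 4) ≤ Real.log ((|a| / 2) ^ 2 + b ^ 2) :=
    Real.log_le_log (by positivity) (by nlinarith [sq_abs a])
  rw [Real.log_div hb.ne' four_ne_zero, (by norm_num : (4 : ℝ) = 2 ^ 2), Real.log_pow] at h
  rw [integral_oddBump_mul_cauchyKernelRe a _ a hb.ne' (by positivity), sub_self, zero_sub,
    zero_add, neg_sq, zero_pow two_ne_zero, zero_add, Real.log_pow]
  push_cast at h ⊢
  linarith

lemma abs_integral_lacunaryBumps_mul_cauchyKernelRe_le_one {c : ℕ → ℝ} (hc : IsLacunary c)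
    (u : ℝ) {b : ℝ} (hb : 0 < b) (hcb : |c 0| ≤ b / 8) :
    |∫ t, lacunaryBumps c t * cauchyKernelRe u b t| ≤ 1 := by
  refine (abs_integral_mul_le_of_support (M := 1 / (2 * b)) ?_ (abs_lacunaryBumps_le hc)
    (fun _ => lacunaryBumps_eq_zero_of_notMem hc)
    fun t _ => abs_cauchyKernelRe_le u t hb).trans ?_
  · linarith [abs_nonneg (c 0)]
  · rw [← div_eq_mul_one_div, div_le_one (by positivity)]
    linarith

lemma integral_lacunaryBumps_mul_cauchyKernelRe {c : ℕ → ℝ} (hc : IsLacunary c) (u : ℝ) {b : ℝ}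
    (hb : 0 < b) (k : ℕ) :
    ∫ t, lacunaryBumps c t * cauchyKernelRe u b t
      = (∑ j ∈ Finset.range k, ∫ t, oddBump (c j) (|c j| / 2) t * cauchyKernelRe u b t)
        + (∫ t, oddBump (c k) (|c k| / 2) t * cauchyKernelRe u b t)
        + ∫ t, lacunaryBumps (fun j => c (j + (k + 1))) t * cauchyKernelRe u b t := by
  set K := cauchyKernelRe u b
  have hint : ∀ j, Integrable fun t => oddBump (c j) (|c j| / 2) t * K t :=
    fun j => (integrable_oddBump _ _).mul_cauchyKernelRe _ hb
  have hearly : Integrable fun t => ∑ j ∈ Finset.range k, oddBump (c j) (|c j| / 2) t * K t :=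
    integrable_finsetSum _ fun j _ => hint j
  have hhead : Integrable fun t =>
      ∑ j ∈ Finset.range k, oddBump (c j) (|c j| / 2) t * K t + oddBump (c k) (|c k| / 2) t * K t :=
    hearly.add (hint k)
  simp_rw [lacunaryBumps_eq_sum_add hc (k + 1), Finset.sum_range_succ, add_mul, Finset.sum_mul]
  rw [integral_add hhead ((integrable_lacunaryBumps (hc.comp_add (k + 1))).mul_cauchyKernelRe _ hb),
    integral_add hearly (hint k), integral_finsetSum _ fun j _ => hint j]

lemma integral_lacunaryBumps_mul_cauchyKernelRe_le {c : ℕ → ℝ} (hc : IsLacunary c) {k : ℕ}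
    {b : ℝ} (hb : 0 < b) (hbc : b < c k ^ 2) (hcb : |c (k + 1)| ≤ b / 8) :
    ∫ t, lacunaryBumps c t * cauchyKernelRe (c k) b t ≤ Real.log b + 4 * (k + 1) := by
  have hc₀ : ∀ j < k, c j ≠ 0 := fun j hj h₀ => by
    have := hc j k hj
    rw [h₀, abs_zero, zero_div, abs_nonpos_iff] at this
    rw [this] at hbc
    linarith
  have hearly : ∑ j ∈ Finset.range k, ∫ t, oddBump (c j) (|c j| / 2) t * cauchyKernelRe (c k) b t
      ≤ 4 * k := by
    refine (Finset.sum_le_sum fun j hj => (le_abs_self _).trans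
      (abs_integral_oddBump_mul_cauchyKernelRe_le_four (hc₀ j (Finset.mem_range.1 hj)) b
        (hc j k (Finset.mem_range.1 hj)))).trans ?_
    simp [mul_comm]
  have hmain := integral_oddBump_mul_cauchyKernelRe_self_le hb hbc
  have htail := abs_integral_lacunaryBumps_mul_cauchyKernelRe_le_one (hc.comp_add (k + 1)) (c k)
    hb (by simpa using hcb)
  have hlog2 : Real.log 2 ≤ 1 := by linarith [Real.log_le_sub_one_of_pos two_pos]
  rw [integral_lacunaryBumps_mul_cauchyKernelRe hc (c k) hb k]
  linarith [le_abs_self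
    (∫ t, lacunaryBumps (fun j => c (j + (k + 1))) t * cauchyKernelRe (c k) b t)]

lemma two_pow_mul_log_one_div_le {b : ℕ → ℝ} (hb : ∀ k, 0 < b k)
    (hsq : ∀ k, b (k + 1) ≤ b k ^ 2) (k : ℕ) :
    2 ^ k * Real.log (1 / b 0) ≤ Real.log (1 / b k) := by
  induction k with
  | zero => simp
  | succ k ih =>
    have h := Real.log_le_log (hb _) (hsq k)
    rw [Real.log_pow] at h
    simp only [one_div, Real.log_inv] at ih ⊢
    push_cast at h
    rw [pow_succ]
    linarith

lemma tendsto_natCast_add_one_div_of_two_pow_mul_le {L : ℕ → ℝ} (hL0 : 0 < L 0)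
    (hL : ∀ k, 2 ^ k * L 0 ≤ L k) : Tendsto (fun k : ℕ => ((k : ℝ) + 1) / L k) atTop (𝓝 0) := by
  have hlim : Tendsto (fun k : ℕ => ((k : ℝ) + 1) / (2 ^ k * L 0)) atTop (𝓝 0) := by
    have h := ((tendsto_pow_const_div_const_pow_of_one_lt 1 one_lt_two).add
      (tendsto_pow_atTop_nhds_zero_of_lt_one (by norm_num : (0 : ℝ) ≤ 1 / 2)
        (by norm_num))).div_const (L 0)
    rw [zero_add, zero_div] at h
    refine h.congr fun k => ?_
    rw [pow_one, div_pow, one_pow]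
    field_simp
  have hLpos : ∀ k, 0 < L k := fun k => (by positivity : (0 : ℝ) < 2 ^ k * L 0).trans_le (hL k)
  refine squeeze_zero (fun k => div_nonneg (by positivity) (hLpos k).le)
    (fun k => div_le_div_of_nonneg_left (by positivity) (by positivity) (hL k)) hlim

lemma exists_lacunary_subseq {x y : ℕ → ℝ} (hy : ∀ n, 0 < y n) (hy0 : Tendsto y atTop (𝓝 0))
    (hx0 : Tendsto x atTop (𝓝 0)) (h : ∀ᶠ n in atTop, y n < x n ^ 2) :
    ∃ φ : ℕ → ℕ, StrictMono φ ∧ IsLacunary (x ∘ φ) ∧ (∀ k, y (φ k) < x (φ k) ^ 2 ∧ y (φ k) < 1) ∧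
      ∀ k, |x (φ (k + 1))| ≤ y (φ k) / 8 := by
  obtain ⟨φ, hP, hR⟩ := exists_seq_of_forall_finset_exists (fun n => y n < x n ^ 2 ∧ y n < 1)
    (fun m n => m < n ∧ |x n| ≤ |x m| / 8 ∧ |x n| ≤ y m / 8) fun s hs => by
      have hx : Tendsto (fun n => |x n|) atTop (𝓝 0) := by simpa using hx0.abs
      refine ((h.and (hy0.eventually_lt_const one_pos)).and
        ((eventually_all_finset s).2 fun m hm => ?_)).exists
      have hxm : 0 < |x m| := abs_pos.2 fun h₀ => by
        have := (hs m hm).1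
        rw [h₀] at this
        linarith [hy m, sq_nonneg (0 : ℝ)]
      exact (eventually_gt_atTop m).and ((hx.eventually_le_const (by positivity)).and
        (hx.eventually_le_const (by linarith [hy m])))
  exact ⟨φ, fun j k hjk => (hR j k hjk).1, fun j k hjk => (hR j k hjk).2.1, hP,
    fun k => (hR k (k + 1) k.lt_succ_self).2.2⟩

lemma normUHGDivLogLimsupGe_lacunaryBumps {x y : ℕ → ℝ} {φ : ℕ → ℕ} (hφ : StrictMono φ)
    (hc : IsLacunary (x ∘ φ)) (hy : ∀ n, 0 < y n) (hP : ∀ k, y (φ k) < x (φ k) ^ 2 ∧ y (φ k) < 1)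
    (hcb : ∀ k, |x (φ (k + 1))| ≤ y (φ k) / 8) :
    NormUHGDivLogLimsupGe (lacunaryBumps (x ∘ φ)) x y π⁻¹ := by
  have hsq : ∀ k, y (φ (k + 1)) ≤ y (φ k) ^ 2 := fun k => by
    nlinarith [(hP (k + 1)).1, hcb k, hy (φ k), sq_abs (x (φ (k + 1))),
      abs_nonneg (x (φ (k + 1)))]
  have hL0 : 0 < Real.log (1 / y (φ 0)) := by
    rw [one_div, Real.log_inv, neg_pos]
    exact Real.log_neg (hy _) (hP 0).2
  have hL := two_pow_mul_log_one_div_le (fun k => hy (φ k)) hsq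
  refine normUHGDivLogLimsupGe_of_subseq hφ.tendsto_atTop (C := fun k => 4 * ((k : ℝ) + 1)) ?_
    (Eventually.of_forall fun k => ⟨(by positivity : (0 : ℝ) < 2 ^ k * _).trans_le (hL k), ?_⟩)
  · simpa only [mul_div_assoc, mul_zero] using
      (tendsto_natCast_add_one_div_of_two_pow_mul_le
        (L := fun k => Real.log (1 / y (φ k))) hL0 hL).const_mul 4
  · exact inv_pi_mul_sub_le_norm_UHG (integrable_lacunaryBumps hc) _ (hy _)
      (integral_lacunaryBumps_mul_cauchyKernelRe_le hc (hy _) (hP k).1 (hcb k))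

/-- **The construction of `g` (upper half-plane form).** For any `x n → 0`, `y n → 0`
with `y n > 0` there is a measurable, compactly supported `ψ` with `|ψ| ≤ 1`
such that `limsup |G_ψ(x n + i y n)| / log(1/y n) ≥ 1/π`. -/
theorem stmt_15 (x y : ℕ → ℝ) (hy : ∀ n, 0 < y n)
    (hy0 : Tendsto y atTop (𝓝 0)) (hx0 : Tendsto x atTop (𝓝 0)) :
    ∃ ψ : ℝ → ℝ, Measurable ψ ∧ HasCompactSupport ψ ∧ (∀ s : ℝ, |ψ s| ≤ 1) ∧
      ∀ ε > (0:ℝ), ∃ᶠ n in atTop,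
        1 / Real.pi - ε ≤
          ‖UHG ψ ((x n : ℂ) + (y n : ℂ) * Complex.I)‖ / Real.log (1 / y n) := by
  by_cases h : ∃ᶠ n in atTop, x n ^ 2 ≤ y n
  · refine ⟨oddBump 0 1, measurable_oddBump 0 1, hasCompactSupport_oddBump 0 1,
      abs_oddBump_le 0 1, ?_⟩
    simpa only [NormUHGDivLogLimsupGe, one_div] using normUHGDivLogLimsupGe_oddBump hy hy0 h
  · obtain ⟨φ, hφ, hc, hP, hcb⟩ := exists_lacunary_subseq hy hy0 hx0 (by simpa using h)
    refine ⟨lacunaryBumps (x ∘ φ), measurable_lacunaryBumps hc,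
      hasCompactSupport_lacunaryBumps hc, abs_lacunaryBumps_le hc, ?_⟩
    simpa only [NormUHGDivLogLimsupGe, one_div] using
      normUHGDivLogLimsupGe_lacunaryBumps hφ hc hy hP hcb
end
end
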